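/- Let $k$ be a field of characteristic $p > 0$ and $B = k\langle x, d\rangle/(dx - xd - 1, d^p)$. In $B^e = B \otimes_{k[x]} B$, the kernel of right multiplication by $d \otimes 1 - 1 \otimes d$ equals the left ideal generated by $\sum_{i=0}^{p-1} d^{p-1-i} \otimes d^i$. -/

import Mathlib

/-!
Over `k[x]`, `B` is free on `1, d, …, d^(p-1)`. These span because `d f(x) = f(x) d + f'(x)`,
and they are independent because `B` acts on `k[x]^p` with `x` acting by multiplication and `d`
by shift plus derivative; the `p`-th power of this operator vanishes since the shift is nilpotent
and `∂^p = 0` in characteristic `p`. Hence every `z ∈ B ⊗_{k[x]} B` is uniquely `∑ z_j ⊗ d^j`,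
and `z δ = ∑ (z_j d - z_{j-1}) ⊗ d^j`. So `z δ = 0` forces `z_j = z_{p-1} d^(p-1-j)`, that is
`z = (z_{p-1} ⊗ 1) σ`. Conversely, the right multiplications `L` by `d ⊗ 1` and `R` by `1 ⊗ d`
commute, and `σ δ` acts as `(L - R) ∑ L^i R^(p-1-i) = L^p - R^p = 0`.
-/

/-- The defining relations `d * x = x * d + 1` and `d^p = 0` of the reduced Weyl
algebra `B = k⟨x,d⟩/(dx - xd - 1, d^p)` (generator `false` is `x`, `true` is `d`). -/
inductive RWRel (k : Type) [Field k] (p : ℕ) :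
    FreeAlgebra k Bool → FreeAlgebra k Bool → Prop
  | weyl : RWRel k p (FreeAlgebra.ι k true * FreeAlgebra.ι k false)
      (FreeAlgebra.ι k false * FreeAlgebra.ι k true + 1)
  | dp : RWRel k p (FreeAlgebra.ι k true ^ p) 0

/-- The generator `x` of the reduced Weyl algebra. -/
noncomputable def Bx (k : Type) [Field k] (p : ℕ) : RingQuot (RWRel k p) :=
  RingQuot.mkAlgHom k (RWRel k p) (FreeAlgebra.ι k false)

/-- The generator `d` of the reduced Weyl algebra. -/
noncomputable def Bd (k : Type) [Field k] (p : ℕ) : RingQuot (RWRel k p) :=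
  RingQuot.mkAlgHom k (RWRel k p) (FreeAlgebra.ι k true)
set_option maxHeartbeats 1000000
set_option maxSynthPendingDepth 3
set_option synthInstance.maxHeartbeats 400000

open scoped TensorProduct

/-- The canonical map `k[x] → B` sending `X` to `x`. -/
noncomputable def phi (k : Type) [Field k] (p : ℕ) : Polynomial k →+* RingQuot (RWRel k p) :=
  (Polynomial.aeval (Bx k p)).toRingHom

/-- `B` as a `k[x]`-module via left multiplication through `phi`. -/
noncomputable instance (k : Type) [Field k] (p : ℕ) :
    Module (Polynomial k) (RingQuot (RWRel k p)) :=
  Module.compHom _ (phi k p)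

/-- Right multiplication by `c` on `B`, as a `k[x]`-linear map. -/
noncomputable def mulRightLin (k : Type) [Field k] (p : ℕ) (c : RingQuot (RWRel k p)) :
    RingQuot (RWRel k p) →ₗ[Polynomial k] RingQuot (RWRel k p) where
  toFun a := a * c
  map_add' a b := add_mul a b c
  map_smul' f a := by
    show (phi k p f * a) * c = phi k p f * (a * c)
    rw [mul_assoc]

/-- Right multiplication by `δ = d ⊗ 1 - 1 ⊗ d` on `B ⊗_{k[x]} B`, acting
componentwise on pure tensors. -/
noncomputable def rdelta (k : Type) [Field k] (p : ℕ) :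
    RingQuot (RWRel k p) ⊗[Polynomial k] RingQuot (RWRel k p) →ₗ[Polynomial k]
      RingQuot (RWRel k p) ⊗[Polynomial k] RingQuot (RWRel k p) :=
  TensorProduct.map (mulRightLin k p (Bd k p))
      (LinearMap.id : RingQuot (RWRel k p) →ₗ[Polynomial k] RingQuot (RWRel k p)) -
    TensorProduct.map
      (LinearMap.id : RingQuot (RWRel k p) →ₗ[Polynomial k] RingQuot (RWRel k p))
      (mulRightLin k p (Bd k p))

/-- Right multiplication by `σ = ∑ d^(p-1-i) ⊗ d^i` on `B ⊗_{k[x]} B`, acting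
componentwise on pure tensors. -/
noncomputable def rsigma (k : Type) [Field k] (p : ℕ) :
    RingQuot (RWRel k p) ⊗[Polynomial k] RingQuot (RWRel k p) →ₗ[Polynomial k]
      RingQuot (RWRel k p) ⊗[Polynomial k] RingQuot (RWRel k p) :=
  ∑ i ∈ Finset.range p,
    TensorProduct.map (mulRightLin k p (Bd k p ^ (p - 1 - i)))
      (mulRightLin k p (Bd k p ^ i))

/-- The element `δ = d ⊗ 1 - 1 ⊗ d` of `B ⊗_{k[x]} B`. -/
noncomputable def deltaElem (k : Type) [Field k] (p : ℕ) :
    RingQuot (RWRel k p) ⊗[Polynomial k] RingQuot (RWRel k p) :=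
  (Bd k p) ⊗ₜ[Polynomial k] (1 : RingQuot (RWRel k p))
    - (1 : RingQuot (RWRel k p)) ⊗ₜ[Polynomial k] (Bd k p)

/-- The element `σ = ∑_{i=0}^{p-1} d^(p-1-i) ⊗ d^i` of `B ⊗_{k[x]} B`. -/
noncomputable def sigmaElem (k : Type) [Field k] (p : ℕ) :
    RingQuot (RWRel k p) ⊗[Polynomial k] RingQuot (RWRel k p) :=
  ∑ i ∈ Finset.range p, (Bd k p ^ (p - 1 - i)) ⊗ₜ[Polynomial k] (Bd k p ^ i)

noncomputable instance (k : Type) [Field k] (p : ℕ) :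
    Zero (RingQuot (RWRel k p) ⊗[Polynomial k] RingQuot (RWRel k p)) :=
  (inferInstance : AddCommMonoid
    (RingQuot (RWRel k p) ⊗[Polynomial k] RingQuot (RWRel k p))).toAddMonoid.toZero

open Polynomial

theorem Polynomial.iterate_derivative_char_eq_zero {R : Type*} [Semiring R] {p : ℕ} [CharP R p]
    (hp : 0 < p) (f : R[X]) : derivative^[p] f = 0 := by
  rw [iterate_derivative_eq_factorial_smul_sum, nsmul_eq_mul,
    (CharP.cast_eq_zero_iff R[X] p _).2 (Nat.dvd_factorial hp le_rfl), zero_mul]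

namespace TensorProduct

variable {R M N P κ : Type*} [CommSemiring R] [AddCommMonoid M] [Module R M]
  [AddCommMonoid N] [Module R N] [AddCommMonoid P] [Module R P] [DecidableEq κ]
  (𝒞 : Module.Basis κ R N)

theorem equivFinsuppOfBasisRight_rTensor_apply (f : M →ₗ[R] P) (z : M ⊗[R] N) (i : κ) :
    equivFinsuppOfBasisRight 𝒞 (f.rTensor N z) i = f (equivFinsuppOfBasisRight 𝒞 z i) := by
  induction z using TensorProduct.induction_on with
  | zero => simp
  | tmul m n => simp
  | add x y hx hy => simp [hx, hy]

theorem equivFinsuppOfBasisRight_lTensor_apply {g : N →ₗ[R] N} {i i' : κ}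
    (hg : ∀ n, 𝒞.repr (g n) i' = 𝒞.repr n i) (z : M ⊗[R] N) :
    equivFinsuppOfBasisRight 𝒞 (g.lTensor M z) i' = equivFinsuppOfBasisRight 𝒞 z i := by
  induction z using TensorProduct.induction_on with
  | zero => simp
  | tmul m n => simp [hg]
  | add x y hx hy => simp [hx, hy]

end TensorProduct

namespace ReducedWeyl

variable {k : Type} [Field k] {p : ℕ}

local notation "B" => RingQuot (RWRel k p)

theorem smul_eq_phi_mul (f : k[X]) (b : B) : f • b = phi k p f * b := rfl

theorem phi_X : phi k p X = Bx k p := by simp [phi]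

theorem Bd_pow_eq_zero : Bd k p ^ p = 0 := by
  simpa [Bd] using RingQuot.mkAlgHom_rel k (RWRel.dp (k := k) (p := p))

theorem Bd_mul_Bx : Bd k p * Bx k p = Bx k p * Bd k p + 1 := by
  simpa [Bd, Bx] using RingQuot.mkAlgHom_rel k (RWRel.weyl (k := k) (p := p))

theorem Bd_mul_phi (f : k[X]) :
    Bd k p * phi k p f = phi k p f * Bd k p + phi k p (derivative f) := by
  induction f using Polynomial.induction_on with
  | C a => simp [phi, Algebra.commutes]
  | add f g hf hg => simp only [map_add, mul_add, add_mul, hf, hg]; abel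
  | monomial n a ih =>
    rw [pow_succ, ← mul_assoc]
    generalize C a * X ^ n = q at ih ⊢
    rw [derivative_mul, derivative_X, mul_one, map_add, map_mul, map_mul, phi_X, ← mul_assoc,
      ih, add_mul, mul_assoc _ (Bd k p), Bd_mul_Bx]
    noncomm_ring

theorem induction_on_Bx_Bd {P : B → Prop} (algebraMap : ∀ r : k, P (algebraMap k B r))
    (x : P (Bx k p)) (d : P (Bd k p)) (add : ∀ a b, P a → P b → P (a + b))
    (mul : ∀ a b, P a → P b → P (a * b)) (b : B) : P b := by
  obtain ⟨a, rfl⟩ := RingQuot.mkAlgHom_surjective k (RWRel k p) b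
  induction a using FreeAlgebra.induction with
  | grade0 r => simpa using algebraMap r
  | grade1 i => cases i with
    | false => exact x
    | true => exact d
  | mul a b ha hb => simpa using mul _ _ ha hb
  | add a b ha hb => simpa using add _ _ ha hb

section Representation

variable (k p)

noncomputable def shift : (Fin p → k[X]) →ₗ[k[X]] (Fin p → k[X]) where
  toFun v i := if h : (i : ℕ) = 0 then 0 else v ⟨i - 1, by omega⟩
  map_add' u v := by ext i : 1; by_cases h : (i : ℕ) = 0 <;> simp [h]
  map_smul' c v := by ext i : 1; by_cases h : (i : ℕ) = 0 <;> simp [h]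

noncomputable def derivOp : (Fin p → k[X]) →ₗ[k] (Fin p → k[X]) :=
  derivative.compLeft (Fin p)

noncomputable def unitVec (m : ℕ) : Fin p → k[X] := fun j => if (j : ℕ) = m then 1 else 0

noncomputable def weylD : Module.End k (Fin p → k[X]) :=
  (shift k p).restrictScalars k + derivOp k p

noncomputable def weylX : Module.End k (Fin p → k[X]) :=
  Algebra.lsmul k k (Fin p → k[X]) (X : k[X])

variable {k p}

theorem unitVec_val_eq_single (i : Fin p) : unitVec k p i = Pi.single i 1 := by
  ext j : 1
  simp [unitVec, Pi.single_apply, Fin.ext_iff]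

theorem shift_unitVec (m : ℕ) : shift k p (unitVec k p m) = unitVec k p (m + 1) := by
  ext i : 1
  simp only [shift, unitVec, LinearMap.coe_mk, AddHom.coe_mk]
  split_ifs <;> first | rfl | omega

theorem derivOp_unitVec (m : ℕ) : derivOp k p (unitVec k p m) = 0 := by
  ext i : 1
  simp only [derivOp, unitVec, LinearMap.compLeft_apply, Function.comp_apply]
  split_ifs <;> simp

theorem shift_iterate_apply_of_lt (n : ℕ) (v : Fin p → k[X]) (i : Fin p) (hi : (i : ℕ) < n) :
    (⇑(shift k p))^[n] v i = 0 := by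
  induction n generalizing i with
  | zero => omega
  | succ n ih =>
    rw [Function.iterate_succ_apply']
    simp only [shift, LinearMap.coe_mk, AddHom.coe_mk]
    split_ifs with h
    · rfl
    · exact ih _ (by simp; omega)

theorem derivOp_iterate_apply (n : ℕ) (v : Fin p → k[X]) (i : Fin p) :
    (⇑(derivOp k p))^[n] v i = derivative^[n] (v i) := by
  induction n with
  | zero => rfl
  | succ n ih => rw [Function.iterate_succ_apply', Function.iterate_succ_apply', ← ih]; rfl

theorem weylD_mul_weylX : weylD k p * weylX k p = weylX k p * weylD k p + 1 := by
  refine LinearMap.ext fun v => funext fun i => ?_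
  simp only [weylD, derivOp, weylX, Module.End.mul_apply, Algebra.lsmul_coe, LinearMap.add_apply,
    LinearMap.coe_restrictScalars, map_smul, Pi.add_apply, Pi.smul_apply, smul_eq_mul,
    LinearMap.compLeft_apply, Function.comp_apply, derivative_mul, derivative_X, one_mul, smul_add,
    Module.End.one_apply]
  ring

theorem weylD_pow_eq_zero (hp : p.Prime) [CharP k p] : weylD k p ^ p = 0 := by
  have : Fact p.Prime := ⟨hp⟩
  have : CharP (Module.End k (Fin p → k[X])) p := charP_of_injective_algebraMap' k p
  have hcomm : Commute ((shift k p).restrictScalars k) (derivOp k p) := by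
    refine LinearMap.ext fun v => funext fun i => ?_
    simp only [Module.End.mul_apply, LinearMap.coe_restrictScalars, shift, derivOp,
      LinearMap.coe_mk, AddHom.coe_mk, LinearMap.compLeft_apply, Function.comp_apply]
    split_ifs <;> simp
  have hshift : (shift k p).restrictScalars k ^ p = 0 :=
    LinearMap.ext fun v => funext fun i => by
      simpa [Module.End.coe_pow] using shift_iterate_apply_of_lt p v i i.2
  have hderiv : derivOp k p ^ p = 0 :=
    LinearMap.ext fun v => funext fun i => by
      simp [Module.End.coe_pow, derivOp_iterate_apply, iterate_derivative_char_eq_zero hp.pos]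
  rw [weylD, add_pow_char_of_commute _ hcomm, hshift, hderiv, add_zero]

variable (k) in
noncomputable def rep (hp : p.Prime) [CharP k p] : B →ₐ[k] Module.End k (Fin p → k[X]) :=
  RingQuot.liftAlgHom k ⟨FreeAlgebra.lift k (fun b => cond b (weylD k p) (weylX k p)), by
    rintro _ _ (_ | _) <;> simp [weylD_mul_weylX, weylD_pow_eq_zero hp]⟩

variable (hp : p.Prime) [CharP k p]

theorem rep_Bd : rep k hp (Bd k p) = weylD k p := by
  simp [rep, Bd]

theorem rep_phi (f : k[X]) : rep k hp (phi k p f) = Algebra.lsmul k k (Fin p → k[X]) f := by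
  have hx : rep k hp (Bx k p) = weylX k p := by simp [rep, Bx]
  rw [phi, AlgHom.toRingHom_eq_coe, RingHom.coe_coe, ← aeval_algHom_apply, hx, weylX,
    aeval_algHom_apply, aeval_X_left_apply]

variable (k) in
noncomputable def coeffs : B →ₗ[k[X]] (Fin p → k[X]) where
  toFun b := rep k hp b (unitVec k p 0)
  map_add' a b := by simp
  map_smul' f b := by simp [smul_eq_phi_mul, rep_phi]

theorem coeffs_Bd_pow (m : ℕ) : coeffs k hp (Bd k p ^ m) = unitVec k p m := by
  induction m with
  | zero => simp [coeffs]
  | succ m ih =>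
    simp only [coeffs, LinearMap.coe_mk, AddHom.coe_mk, map_pow, rep_Bd] at ih ⊢
    rw [pow_succ', Module.End.mul_apply, ih, weylD, LinearMap.add_apply,
      LinearMap.coe_restrictScalars, shift_unitVec, derivOp_unitVec, add_zero]

end Representation

section PowBasis

theorem span_Bd_pow_eq_top (hp : 0 < p) :
    Submodule.span k[X] (Set.range fun i : Fin p => Bd k p ^ (i : ℕ)) = ⊤ := by
  set S := Submodule.span k[X] (Set.range fun i : Fin p => Bd k p ^ (i : ℕ))
  have hBd : ∀ s ∈ S, Bd k p * s ∈ S := by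
    intro s hs
    induction hs using Submodule.span_induction with
    | mem _ h =>
      obtain ⟨i, rfl⟩ := h
      rw [← pow_succ']
      rcases (show (i : ℕ) + 1 ≤ p from i.2).lt_or_eq with h | h
      · exact Submodule.subset_span ⟨⟨i + 1, h⟩, rfl⟩
      · rw [h, Bd_pow_eq_zero]
        exact S.zero_mem
    | zero => simp
    | add _ _ _ _ ha hb => rw [mul_add]; exact S.add_mem ha hb
    | smul f t ht ih =>
      rw [smul_eq_phi_mul, ← mul_assoc, Bd_mul_phi, add_mul, mul_assoc, ← smul_eq_phi_mul,
        ← smul_eq_phi_mul]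
      exact S.add_mem (S.smul_mem f ih) (S.smul_mem _ ht)
  have hmul : ∀ b : B, ∀ s ∈ S, b * s ∈ S := by
    refine induction_on_Bx_Bd (fun r s hs => ?_) (fun s hs => ?_) hBd
      (fun a b ha hb s hs => ?_) (fun a b ha hb s hs => ?_)
    · rw [show algebraMap k B r = phi k p (C r) by simp [phi], ← smul_eq_phi_mul]
      exact S.smul_mem _ hs
    · rw [← phi_X, ← smul_eq_phi_mul]
      exact S.smul_mem _ hs
    · rw [add_mul]
      exact S.add_mem (ha s hs) (hb s hs)
    · rw [mul_assoc]
      exact ha _ (hb s hs)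
  refine eq_top_iff.2 fun b _ => ?_
  simpa using hmul b 1 (Submodule.subset_span ⟨⟨0, hp⟩, pow_zero _⟩)

theorem linearIndependent_Bd_pow (hp : p.Prime) [CharP k p] :
    LinearIndependent k[X] fun i : Fin p => Bd k p ^ (i : ℕ) := by
  refine LinearIndependent.of_comp (coeffs k hp) ?_
  convert (Pi.basisFun k[X] (Fin p)).linearIndependent using 1
  ext i : 1
  rw [Function.comp_apply, coeffs_Bd_pow, unitVec_val_eq_single, Pi.basisFun_apply]

variable (hp : p.Prime) [CharP k p]

variable (k) in
noncomputable def powBasis : Module.Basis (Fin p) k[X] B :=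
  Module.Basis.mk (linearIndependent_Bd_pow hp) (span_Bd_pow_eq_top hp.pos).ge

theorem powBasis_apply (i : Fin p) : powBasis k hp i = Bd k p ^ (i : ℕ) :=
  Module.Basis.mk_apply ..

theorem powBasis_equivFun (y : B) : (powBasis k hp).equivFun y = coeffs k hp y := by
  refine LinearMap.congr_fun ((powBasis k hp).ext fun i => ?_) y
  ext j : 1
  rw [LinearEquiv.coe_coe, Module.Basis.equivFun_self, powBasis_apply, coeffs_Bd_pow, unitVec]
  simp [Fin.ext_iff, eq_comm]

theorem coeffs_mul_Bd (y : B) : coeffs k hp (y * Bd k p) = shift k p (coeffs k hp y) := by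
  refine LinearMap.congr_fun ((powBasis k hp).ext (f₁ := coeffs k hp ∘ₗ mulRightLin k p (Bd k p))
    (f₂ := shift k p ∘ₗ coeffs k hp) fun i => ?_) y
  simp [powBasis_apply, mulRightLin, ← pow_succ, coeffs_Bd_pow, shift_unitVec]

theorem powBasis_repr_mul_Bd (y : B) (j : Fin p) (hj : (j : ℕ) + 1 < p) :
    (powBasis k hp).repr (y * Bd k p) ⟨j + 1, hj⟩ = (powBasis k hp).repr y j := by
  rw [← Module.Basis.equivFun_apply, ← Module.Basis.equivFun_apply, powBasis_equivFun,
    powBasis_equivFun, coeffs_mul_Bd]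
  simp [shift]

end PowBasis

section Resolution

open TensorProduct

theorem mulRightLin_pow (c : B) (n : ℕ) : mulRightLin k p c ^ n = mulRightLin k p (c ^ n) := by
  induction n with
  | zero => ext a; simp [mulRightLin]
  | succ n ih => rw [pow_succ, ih]; ext a; simp [mulRightLin, pow_succ', mul_assoc]

theorem rdelta_eq :
    rdelta k p = (mulRightLin k p (Bd k p)).rTensor B - (mulRightLin k p (Bd k p)).lTensor B :=
  rfl

theorem rsigma_tmul (a b : B) :
    rsigma k p (a ⊗ₜ b) = ∑ i ∈ Finset.range p, (a * Bd k p ^ (p - 1 - i)) ⊗ₜ (b * Bd k p ^ i) := by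
  simp [rsigma, mulRightLin]

theorem rdelta_comp_rsigma : rdelta k p ∘ₗ rsigma k p = 0 := by
  set L := (mulRightLin k p (Bd k p)).rTensor B
  set R := (mulRightLin k p (Bd k p)).lTensor B
  have hLR : Commute L R := by
    simp only [Commute, SemiconjBy, Module.End.mul_eq_comp, L, R, LinearMap.rTensor_comp_lTensor,
      LinearMap.lTensor_comp_rTensor]
  have hσ : rsigma k p = ∑ i ∈ Finset.range p, L ^ i * R ^ (p - 1 - i) := by
    rw [← hLR.symm.geom_sum₂_comm, rsigma]
    refine Finset.sum_congr rfl fun i _ => ?_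
    rw [LinearMap.rTensor_pow, LinearMap.lTensor_pow, mulRightLin_pow, mulRightLin_pow]
    simp only [Module.End.mul_eq_comp, LinearMap.lTensor_comp_rTensor]
  have hLp : L ^ p = 0 := by
    rw [LinearMap.rTensor_pow, mulRightLin_pow, Bd_pow_eq_zero]
    ext; simp [mulRightLin]
  have hRp : R ^ p = 0 := by
    rw [LinearMap.lTensor_pow, mulRightLin_pow, Bd_pow_eq_zero]
    ext; simp [mulRightLin]
  rw [← Module.End.mul_eq_comp, hσ, rdelta_eq, hLR.mul_geom_sum₂, hLp, hRp, sub_zero]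

theorem equivFinsuppOfBasisRight_succ_mul_Bd_of_rdelta_eq_zero (hp : p.Prime) [CharP k p]
    {z : B ⊗[k[X]] B} (hz : rdelta k p z = 0) (j : Fin p) (hj : (j : ℕ) + 1 < p) :
    equivFinsuppOfBasisRight (powBasis k hp) z ⟨j + 1, hj⟩ * Bd k p =
      equivFinsuppOfBasisRight (powBasis k hp) z j := by
  have h := congrArg (fun z => equivFinsuppOfBasisRight (powBasis k hp) z ⟨j + 1, hj⟩) hz
  rwa [rdelta_eq, LinearMap.sub_apply, map_sub, Finsupp.sub_apply,
    equivFinsuppOfBasisRight_rTensor_apply,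
    equivFinsuppOfBasisRight_lTensor_apply _ (powBasis_repr_mul_Bd hp · j hj), map_zero,
    Finsupp.coe_zero, Pi.zero_apply, sub_eq_zero] at h

theorem equivFinsuppOfBasisRight_eq_mul_Bd_pow_of_rdelta_eq_zero (hp : p.Prime) [CharP k p]
    {z : B ⊗[k[X]] B} (hz : rdelta k p z = 0) (j : Fin p) :
    equivFinsuppOfBasisRight (powBasis k hp) z j =
      equivFinsuppOfBasisRight (powBasis k hp) z ⟨p - 1, Nat.sub_one_lt hp.ne_zero⟩ *
        Bd k p ^ (p - 1 - j) := by
  set c := equivFinsuppOfBasisRight (powBasis k hp) z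
  suffices ∀ m (j : Fin p), (j : ℕ) + m = p - 1 →
      c j = c ⟨p - 1, Nat.sub_one_lt hp.ne_zero⟩ * Bd k p ^ m from this _ j (by omega)
  intro m
  induction m with
  | zero =>
    intro j hj
    rw [pow_zero, mul_one]
    congr
    ext
    omega
  | succ m ih =>
    intro j hj
    rw [← equivFinsuppOfBasisRight_succ_mul_Bd_of_rdelta_eq_zero hp hz j (by omega),
      ih _ (by simp; omega), pow_succ, mul_assoc]

theorem exists_rsigma_eq_of_rdelta_eq_zero (hp : p.Prime) [CharP k p] {z : B ⊗[k[X]] B}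
    (hz : rdelta k p z = 0) : ∃ u, rsigma k p u = z := by
  set e := equivFinsuppOfBasisRight (M := B) (powBasis k hp)
  refine ⟨e z ⟨p - 1, Nat.sub_one_lt hp.ne_zero⟩ ⊗ₜ 1, ?_⟩
  conv_rhs => rw [← e.symm_apply_apply z]
  rw [rsigma_tmul, equivFinsuppOfBasisRight_symm_apply,
    Finsupp.sum_fintype _ _ (by simp), ← Fin.sum_univ_eq_sum_range]
  refine Finset.sum_congr rfl fun j _ => ?_
  rw [one_mul, equivFinsuppOfBasisRight_eq_mul_Bd_pow_of_rdelta_eq_zero hp hz j, powBasis_apply]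

end Resolution

end ReducedWeyl

/-- In `B^e = B ⊗_{k[x]} B`, the kernel of right multiplication by
`δ = d ⊗ 1 - 1 ⊗ d` equals the left ideal generated by
`σ = ∑_{i=0}^{p-1} d^(p-1-i) ⊗ d^i`, i.e. the range of right multiplication by `σ`. -/
theorem statement17 (k : Type) [Field k] (p : ℕ) (hp : p.Prime) [CharP k p] :
    LinearMap.ker (rdelta k p) = LinearMap.range (rsigma k p) :=
  le_antisymm (fun _ hz => ReducedWeyl.exists_rsigma_eq_of_rdelta_eq_zero hp hz)
    (LinearMap.range_le_ker_iff.2 ReducedWeyl.rdelta_comp_rsigma)
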